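/- Let V be a subspace of H, Ω an operator with 0 ≤ Ω ≤ I, and s, ε ∈ (0,1). If min over density operators ρ with range(ρ) ⊆ V and σ with tr(σ Π_V) ≤ 1 − ε of tr(Ω(ρ − σ)) exceeds ε·s, then min over ρ with range(ρ) ⊆ V and σ with range(σ) ⊆ V^⊥ of tr(Ω(ρ − σ)) exceeds s. -/

import Mathlib

open Matrix
open scoped ComplexOrder

namespace QSVQDH

variable {d : ℕ}

/-- Schatten 1-norm (trace norm). -/
noncomputable def trNorm (A : Matrix (Fin d) (Fin d) ℂ) : ℝ :=
  (((Matrix.posSemidef_conjTranspose_mul_self A).1.eigenvectorUnitary : Matrix (Fin d) (Fin d) ℂ) *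
    diagonal (((↑) : ℝ → ℂ) ∘ (√·) ∘ (Matrix.posSemidef_conjTranspose_mul_self A).1.eigenvalues) *
    (star (Matrix.posSemidef_conjTranspose_mul_self A).1.eigenvectorUnitary :
      Matrix (Fin d) (Fin d) ℂ)).trace.re

/-- Schatten 2-norm (Hilbert–Schmidt norm). -/
noncomputable def hsNorm (A : Matrix (Fin d) (Fin d) ℂ) : ℝ :=
  Real.sqrt ((Aᴴ * A).trace.re)

/-- Operator norm. -/
noncomputable def opNorm (A : Matrix (Fin d) (Fin d) ℂ) : ℝ :=
  ‖Matrix.toEuclideanCLM (𝕜 := ℂ) A‖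

/-- Density operator: positive semidefinite with unit trace. -/
def IsDensity (ρ : Matrix (Fin d) (Fin d) ℂ) : Prop := ρ.PosSemidef ∧ ρ.trace = 1

/-- POVM element: 0 ≤ M ≤ I. -/
def IsPOVMElem (M : Matrix (Fin d) (Fin d) ℂ) : Prop := M.PosSemidef ∧ (1 - M).PosSemidef

/-- A measurement class of binary effects: contains 0, consists of POVM elements,
is convex, and is closed under M ↦ I − M. -/
def IsMClass (Mset : Set (Matrix (Fin d) (Fin d) ℂ)) : Prop :=
  0 ∈ Mset ∧ (∀ M ∈ Mset, IsPOVMElem M) ∧ Convex ℝ Mset ∧ (∀ M ∈ Mset, 1 - M ∈ Mset)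

/-- The M-seminorm ‖Δ‖_M = sup_{M ∈ Mset} (2 tr(MΔ) − tr Δ). -/
noncomputable def Mnorm (Mset : Set (Matrix (Fin d) (Fin d) ℂ))
    (Δ : Matrix (Fin d) (Fin d) ℂ) : ℝ :=
  sSup ((fun M => 2 * (M * Δ).trace.re - Δ.trace.re) '' Mset)

/-- The ε-distinguishability ratio μ_{ρ,M}(ε). -/
noncomputable def mu (Mset : Set (Matrix (Fin d) (Fin d) ℂ))
    (ρ : Matrix (Fin d) (Fin d) ℂ) (ε : ℝ) : ℝ :=
  (1 / (2 * ε)) *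
    sInf ((fun σ => Mnorm Mset (ρ - σ)) '' {σ | IsDensity σ ∧ 2 * ε ≤ trNorm (ρ - σ)})

/-- The ε-visibility γ_{V,M}(ε), where the subspace V is given by its
orthogonal projector P. -/
noncomputable def gamma (Mset : Set (Matrix (Fin d) (Fin d) ℂ))
    (P : Matrix (Fin d) (Fin d) ℂ) (ε : ℝ) : ℝ :=
  (1 / ε) * sSup ((fun Ω =>
      sInf ((fun p : Matrix (Fin d) (Fin d) ℂ × Matrix (Fin d) (Fin d) ℂ =>
          (Ω * (p.1 - p.2)).trace.re) ''
        {p | IsDensity p.1 ∧ P * p.1 = p.1 ∧ IsDensity p.2 ∧ (p.2 * P).trace.re ≤ 1 - ε}))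
    '' Mset)

/-- The ε-visibility in its minimax (minimum) form. -/
noncomputable def gammaMin (Mset : Set (Matrix (Fin d) (Fin d) ℂ))
    (P : Matrix (Fin d) (Fin d) ℂ) (ε : ℝ) : ℝ :=
  sInf ((fun p : Matrix (Fin d) (Fin d) ℂ × Matrix (Fin d) (Fin d) ℂ =>
      (1 / (2 * ε)) * Mnorm Mset (p.1 - p.2)) ''
    {p | IsDensity p.1 ∧ P * p.1 = p.1 ∧ IsDensity p.2 ∧ (p.2 * P).trace.re ≤ 1 - ε})

/-- μ_{ρ,M}(1), defined through perfectly distinguishable (orthogonal) counterparts. -/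
noncomputable def muone (Mset : Set (Matrix (Fin d) (Fin d) ℂ))
    (ρ : Matrix (Fin d) (Fin d) ℂ) : ℝ :=
  (1 / 2) * sInf ((fun σ => Mnorm Mset (ρ - σ)) '' {σ | IsDensity σ ∧ (ρ * σ).trace = 0})

/-- The distinguishability ratio μ̂_{ρ,M}. -/
noncomputable def muhat (Mset : Set (Matrix (Fin d) (Fin d) ℂ))
    (ρ : Matrix (Fin d) (Fin d) ℂ) : ℝ :=
  sInf ((fun σ => Mnorm Mset (ρ - σ) / trNorm (ρ - σ)) '' {σ | IsDensity σ ∧ σ ≠ ρ})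

theorem convex_setOf_isDensity : Convex ℝ {ρ : Matrix (Fin d) (Fin d) ℂ | IsDensity ρ} := by
  intro ρ hρ σ hσ a b ha hb hab
  refine ⟨(hρ.1.smul ha).add (hσ.1.smul hb), ?_⟩
  rw [trace_add, trace_smul, trace_smul, hρ.2, hσ.2, ← add_smul, hab, one_smul]

lemma re_trace_mixture_mul (ρ σ P : Matrix (Fin d) (Fin d) ℂ) (t : ℝ) :
    (((1 - t) • ρ + t • σ) * P).trace.re = (1 - t) * (ρ * P).trace.re + t * (σ * P).trace.re := by
  simp [add_mul, trace_add, trace_smul]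

lemma re_trace_mul_sub_mixture (Ω ρ σ : Matrix (Fin d) (Fin d) ℂ) (t : ℝ) :
    (Ω * (ρ - ((1 - t) • ρ + t • σ))).trace.re = t * (Ω * (ρ - σ)).trace.re := by
  have hdiff : ρ - ((1 - t) • ρ + t • σ) = t • (ρ - σ) := by module
  rw [hdiff, mul_smul_comm, trace_smul, Complex.smul_re, smul_eq_mul]

theorem deviation_lemma_first_general (P Ω : Matrix (Fin d) (Fin d) ℂ)
    (s ε : ℝ) (hε : ε ∈ Set.Ioo (0 : ℝ) 1)
    (hmin : ∀ ρ σ : Matrix (Fin d) (Fin d) ℂ, IsDensity ρ → P * ρ = ρ →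
      IsDensity σ → (σ * P).trace.re ≤ 1 - ε → ε * s < (Ω * (ρ - σ)).trace.re) :
    ∀ ρ σ : Matrix (Fin d) (Fin d) ℂ, IsDensity ρ → P * ρ = ρ →
      IsDensity σ → P * σ = 0 → s < (Ω * (ρ - σ)).trace.re := by
  intro ρ σ hρ hPρ hσ hPσ
  obtain ⟨hε0, hε1⟩ := hε
  have hmix : IsDensity ((1 - ε) • ρ + ε • σ) :=
    convex_setOf_isDensity hρ hσ (by linarith) hε0.le (by ring)
  have hρP : (ρ * P).trace.re = 1 := by simp [trace_mul_comm ρ, hPρ, hρ.2]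
  have hσP : (σ * P).trace.re = 0 := by simp [trace_mul_comm σ, hPσ]
  have hlow : (((1 - ε) • ρ + ε • σ) * P).trace.re ≤ 1 - ε := by
    rw [re_trace_mixture_mul, hρP, hσP]
    linarith
  have hadv := hmin ρ _ hρ hPρ hmix hlow
  rw [re_trace_mul_sub_mixture] at hadv
  exact lt_of_mul_lt_mul_left hadv hε0.le

/-- first part of Lemma 1: if the detection advantage over all low-fidelity
states exceeds ε·s, then the advantage over all states supported on V^⊥ exceeds s. -/
theorem deviation_lemma_first (P Ω : Matrix (Fin d) (Fin d) ℂ)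
    (hP : P.IsHermitian) (hP2 : P * P = P) (hP0 : P ≠ 0) (hP1 : P ≠ 1)
    (hΩ : IsPOVMElem Ω) (s ε : ℝ) (hs : s ∈ Set.Ioo (0 : ℝ) 1) (hε : ε ∈ Set.Ioo (0 : ℝ) 1)
    (hmin : ∀ ρ σ : Matrix (Fin d) (Fin d) ℂ, IsDensity ρ → P * ρ = ρ →
      IsDensity σ → (σ * P).trace.re ≤ 1 - ε → ε * s < (Ω * (ρ - σ)).trace.re) :
    ∀ ρ σ : Matrix (Fin d) (Fin d) ℂ, IsDensity ρ → P * ρ = ρ →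
      IsDensity σ → P * σ = 0 → s < (Ω * (ρ - σ)).trace.re :=
  deviation_lemma_first_general P Ω s ε hε hmin

end QSVQDH
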